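/- arXiv:1908.07122 — 5 statements merged into one kernel-verified Lean document; each statement's English description precedes it below -/
import Mathlib

section
/- Let p > 1, let N ≥ 2 be an integer, let α be a nonzero real number, let k be an integer with 0 ≤ k ≤ (N−1)/2, and let ω > α²/(N−2k)². Set a_k = arctanh(α/((2k−N)√ω)) and define, for x ≥ 0, φ_j(x) = (((p+1)ω/2)·sech²(((p−1)√ω/2)·x − a_k))^{1/(p−1)} for 1 ≤ j ≤ k and φ_j(x) = (((p+1)ω/2)·sech²(((p−1)√ω/2)·x + a_k))^{1/(p−1)} for k+1 ≤ j ≤ N. Then each φ_j is positive and twice continuously differentiable on [0,∞), satisfies −φ_j''(x) + ω·φ_j(x) − φ_j(x)^p = 0 for all x > 0, the boundary values agree: φ_1(0) = φ_2(0) = … = φ_N(0), and the derivatives satisfy the δ-vertex condition ∑_{j=1}^N φ_j'(0) = α·φ_1(0). -/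
/-!
With `b = (p - 1)√ω / 2`, `q = 2 / (p - 1)` and `A = ((p + 1) ω / 2) ^ (1 / (p - 1))`,
every edge profile has the form `A · cosh (b x + c) ^ (-q)` with `c = ∓a`, so its logarithmic
derivative is `-q b tanh (b x + c) = -√ω tanh (b x + c)`. Differentiating once more and using
`tanh² = 1 - sech²` gives `φ'' = (ω - (p + 1) ω / 2 · sech² (b x + c)) φ`, and
`(p + 1) ω / 2 · sech² (b x + c)` is exactly `φ ^ (p - 1)`.
At the vertex every profile takes the same value `φ(0)`, which depends on `c` only via `cosh c`,
while the slopes are `±√ω tanh a · φ(0)`, with sign `+` on `k` edges and `-` on `N - k` edges.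
They add up to `(2k - N)√ω tanh a · φ(0) = α φ(0)` since `tanh a = α / ((2k - N)√ω)`.
-/

open MeasureTheory Real Set Filter Topology

/-- Inverse hyperbolic tangent. -/
noncomputable def arctanh (x : ℝ) : ℝ := Real.log ((1 + x) / (1 - x)) / 2

theorem Real.hasDerivAt_tanh (x : ℝ) : HasDerivAt tanh (1 / cosh x ^ 2) x := by
  have h := (hasDerivAt_sinh x).div (hasDerivAt_cosh x) (cosh_pos x).ne'
  rw [show tanh = fun y => sinh y / cosh y from funext tanh_eq_sinh_div_cosh]
  refine h.congr_deriv ?_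
  rw [← cosh_sq_sub_sinh_sq x]
  ring

theorem Real.tanh_sq_add_one_div_cosh_sq (x : ℝ) : tanh x ^ 2 + 1 / cosh x ^ 2 = 1 := by
  rw [tanh_eq_sinh_div_cosh, div_pow, ← add_div, sinh_sq, sub_add_cancel,
    div_self (pow_ne_zero 2 (cosh_pos x).ne')]

section CoshRpow

variable (A b c q : ℝ)

theorem hasDerivAt_const_mul_cosh_rpow (x : ℝ) :
    HasDerivAt (fun x => A * cosh (b * x + c) ^ (-q))
      (-(q * b) * tanh (b * x + c) * (A * cosh (b * x + c) ^ (-q))) x := by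
  have hu : HasDerivAt (fun x => b * x + c) b x := by
    simpa using ((hasDerivAt_id x).const_mul b).add_const c
  have h := (((hasDerivAt_cosh _).comp x hu).rpow_const (p := -q)
    (Or.inl (cosh_pos _).ne')).const_mul A
  refine h.congr_deriv ?_
  rw [Function.comp_apply, rpow_sub_one (cosh_pos _).ne', tanh_eq_sinh_div_cosh]
  field_simp

theorem deriv_const_mul_cosh_rpow :
    deriv (fun x => A * cosh (b * x + c) ^ (-q)) =
      fun x => -(q * b) * tanh (b * x + c) * (A * cosh (b * x + c) ^ (-q)) :=
  funext fun x => (hasDerivAt_const_mul_cosh_rpow A b c q x).deriv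

theorem hasDerivAt_deriv_const_mul_cosh_rpow (x : ℝ) :
    HasDerivAt (deriv (fun x => A * cosh (b * x + c) ^ (-q)))
      ((q ^ 2 * b ^ 2 - q * (q + 1) * b ^ 2 / cosh (b * x + c) ^ 2) *
        (A * cosh (b * x + c) ^ (-q))) x := by
  have hu : HasDerivAt (fun x => b * x + c) b x := by
    simpa using ((hasDerivAt_id x).const_mul b).add_const c
  have h := (((hasDerivAt_tanh _).comp x hu).const_mul (-(q * b))).mul
    (hasDerivAt_const_mul_cosh_rpow A b c q x)
  rw [deriv_const_mul_cosh_rpow]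
  refine h.congr_deriv ?_
  have := tanh_sq_add_one_div_cosh_sq (b * x + c)
  rw [Function.comp_apply]
  linear_combination (q ^ 2 * b ^ 2 * (A * cosh (b * x + c) ^ (-q))) * this

end CoshRpow

theorem Finset.sum_range_ite_add_one_le {M : Type*} [AddCommMonoid M] {k N : ℕ} (hk : k ≤ N)
    (u v : M) : ∑ j ∈ range N, (if j + 1 ≤ k then u else v) = k • u + (N - k) • v := by
  rw [← sum_range_add_sum_Ico _ hk,
    sum_congr rfl fun j hj => if_pos (Nat.succ_le_of_lt (mem_range.mp hj)),
    sum_congr rfl fun j hj => if_neg (by have := (mem_Ico.mp hj).1; omega),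
    sum_const, sum_const, card_range, Nat.card_Ico]

noncomputable def solitonProfile (p ω c : ℝ) (x : ℝ) : ℝ :=
  ((p + 1) * ω / 2 * (1 / cosh ((p - 1) * √ω / 2 * x + c)) ^ 2) ^ (1 / (p - 1))

section SolitonProfile

variable {p ω : ℝ}

theorem solitonProfile_base_pos (hp : 1 < p) (hω : 0 < ω) (c x : ℝ) :
    0 < (p + 1) * ω / 2 * (1 / cosh ((p - 1) * √ω / 2 * x + c)) ^ 2 := by
  have hcosh := cosh_pos ((p - 1) * √ω / 2 * x + c)
  have hp1 : 0 < p + 1 := by linarith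
  positivity

theorem solitonProfile_pos (hp : 1 < p) (hω : 0 < ω) (c x : ℝ) : 0 < solitonProfile p ω c x :=
  rpow_pos_of_pos (solitonProfile_base_pos hp hω c x) _

theorem contDiff_solitonProfile (hp : 1 < p) (hω : 0 < ω) (c : ℝ) :
    ContDiff ℝ 2 (solitonProfile p ω c) := by
  refine ContDiff.rpow_const_of_ne ?_ fun x => (solitonProfile_base_pos hp hω c x).ne'
  refine contDiff_const.mul (ContDiff.pow (contDiff_const.div ?_ fun x => (cosh_pos _).ne') 2)
  exact contDiff_cosh.comp ((contDiff_const.mul contDiff_id).add contDiff_const)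

theorem solitonProfile_rpow_sub_one (hp : 1 < p) (hω : 0 < ω) (c x : ℝ) :
    solitonProfile p ω c x ^ (p - 1) =
      (p + 1) * ω / 2 / cosh ((p - 1) * √ω / 2 * x + c) ^ 2 := by
  rw [solitonProfile, one_div (p - 1),
    rpow_inv_rpow (solitonProfile_base_pos hp hω c x).le (by linarith : p - 1 ≠ 0)]
  ring

theorem solitonProfile_eq_const_mul_cosh_rpow (hp : 1 < p) (hω : 0 < ω) (c : ℝ) :
    solitonProfile p ω c = fun x =>
      ((p + 1) * ω / 2) ^ (1 / (p - 1)) *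
        cosh ((p - 1) * √ω / 2 * x + c) ^ (-(2 / (p - 1))) := by
  funext x
  have hcosh := cosh_pos ((p - 1) * √ω / 2 * x + c)
  have hsech : (1 / cosh ((p - 1) * √ω / 2 * x + c)) ^ 2 =
      cosh ((p - 1) * √ω / 2 * x + c) ^ (-2 : ℝ) := by
    rw [rpow_neg hcosh.le, rpow_two, one_div, inv_pow]
  rw [solitonProfile, mul_rpow (by nlinarith) (by positivity), hsech, ← rpow_mul hcosh.le]
  ring_nf

theorem deriv_solitonProfile (hp : 1 < p) (hω : 0 < ω) (c : ℝ) :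
    deriv (solitonProfile p ω c) = fun x =>
      -√ω * tanh ((p - 1) * √ω / 2 * x + c) * solitonProfile p ω c x := by
  have hqb : 2 / (p - 1) * ((p - 1) * √ω / 2) = √ω := by
    field_simp [(by linarith : p - 1 ≠ 0)]
  rw [solitonProfile_eq_const_mul_cosh_rpow hp hω, deriv_const_mul_cosh_rpow, hqb]

theorem deriv_deriv_solitonProfile (hp : 1 < p) (hω : 0 < ω) (c x : ℝ) :
    deriv (deriv (solitonProfile p ω c)) x =
      ω * solitonProfile p ω c x - solitonProfile p ω c x ^ p := by
  have hp1 : p - 1 ≠ 0 := by linarith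
  have hqb_sq : (2 / (p - 1)) ^ 2 * ((p - 1) * √ω / 2) ^ 2 = ω := by
    field_simp
    rw [sq_sqrt hω.le]
  have hqqb_sq :
      2 / (p - 1) * (2 / (p - 1) + 1) * ((p - 1) * √ω / 2) ^ 2 = (p + 1) * ω / 2 := by
    field_simp
    rw [sq_sqrt hω.le]
    ring
  have hsplit : solitonProfile p ω c x ^ p =
      solitonProfile p ω c x * solitonProfile p ω c x ^ (p - 1) := by
    rw [← rpow_one_add' (solitonProfile_pos hp hω c x).le (by linarith), add_sub_cancel]
  rw [hsplit, solitonProfile_rpow_sub_one hp hω, solitonProfile_eq_const_mul_cosh_rpow hp hω,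
    (hasDerivAt_deriv_const_mul_cosh_rpow _ _ _ _ x).deriv, hqb_sq, hqqb_sq]
  ring

theorem solitonProfile_neg_apply_zero (c : ℝ) :
    solitonProfile p ω (-c) 0 = solitonProfile p ω c 0 := by
  simp [solitonProfile]

theorem deriv_solitonProfile_zero (hp : 1 < p) (hω : 0 < ω) (c : ℝ) :
    deriv (solitonProfile p ω c) 0 = -(√ω * tanh c) * solitonProfile p ω c 0 := by
  simp only [deriv_solitonProfile hp hω, mul_zero, zero_add, neg_mul]

theorem sum_deriv_solitonProfile_zero (hp : 1 < p) (hω : 0 < ω) {k N : ℕ} (hkN : k ≤ N)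
    (a : ℝ) :
    ∑ j ∈ Finset.range N, deriv (solitonProfile p ω (if j + 1 ≤ k then -a else a)) 0 =
      (2 * k - N) * √ω * tanh a * solitonProfile p ω a 0 := by
  have hterm : ∀ j, deriv (solitonProfile p ω (if j + 1 ≤ k then -a else a)) 0 =
      if j + 1 ≤ k then √ω * tanh a * solitonProfile p ω a 0
      else -(√ω * tanh a * solitonProfile p ω a 0) := by
    intro j
    split_ifs
    · rw [deriv_solitonProfile_zero hp hω, tanh_neg, solitonProfile_neg_apply_zero]
      ring
    · rw [deriv_solitonProfile_zero hp hω, neg_mul]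
  rw [Finset.sum_congr rfl fun j _ => hterm j, Finset.sum_range_ite_add_one_le hkN,
    nsmul_eq_mul, nsmul_eq_mul, Nat.cast_sub hkN]
  ring

end SolitonProfile

theorem tanh_arctanh {x : ℝ} (hx : x ∈ Ioo (-1) 1) : tanh (arctanh x) = x := by
  have : arctanh x = artanh x := by
    rw [artanh_eq_half_log (Ioo_subset_Icc_self hx), arctanh]
    ring
  rw [this, Real.tanh_artanh hx]

theorem div_mul_sqrt_mem_Ioo {α d ω : ℝ} (hd : d ≠ 0) (h : α ^ 2 / d ^ 2 < ω) :
    α / (d * √ω) ∈ Ioo (-1) 1 := by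
  have hω : 0 < ω := (div_nonneg (sq_nonneg α) (sq_nonneg d)).trans_lt h
  rw [mem_Ioo, ← abs_lt, ← sq_lt_one_iff_abs_lt_one, div_pow, mul_pow, sq_sqrt hω.le,
    div_lt_one (by positivity), ← div_lt_iff₀' (by positivity)]
  exact h

theorem stationary_profile_solves_NLS_delta_general
    (p : ℝ) (hp : 1 < p) (N : ℕ) (α : ℝ)
    (k : ℕ) (hk : (k : ℝ) ≤ ((N : ℝ) - 1) / 2) (ω : ℝ)
    (hω : α ^ 2 / ((N : ℝ) - 2 * (k : ℝ)) ^ 2 < ω)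
    (a : ℝ) (ha : a = arctanh (α / ((2 * (k : ℝ) - (N : ℝ)) * Real.sqrt ω)))
    (Φ : ℕ → ℝ → ℝ)
    (hΦ : ∀ j, Φ j = fun x : ℝ =>
      if j + 1 ≤ k then
        ((p + 1) * ω / 2 *
          (1 / Real.cosh ((p - 1) * Real.sqrt ω / 2 * x - a)) ^ 2) ^ (1 / (p - 1))
      else
        ((p + 1) * ω / 2 *
          (1 / Real.cosh ((p - 1) * Real.sqrt ω / 2 * x + a)) ^ 2) ^ (1 / (p - 1))) :
    (∀ j < N, ∀ x ≥ (0 : ℝ), 0 < Φ j x) ∧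
    (∀ j < N, ContDiffOn ℝ 2 (Φ j) (Set.Ici 0)) ∧
    (∀ j < N, ∀ x > (0 : ℝ), -(deriv (deriv (Φ j)) x) + ω * Φ j x - Φ j x ^ p = 0) ∧
    (∀ i < N, ∀ j < N, Φ i 0 = Φ j 0) ∧
    (∑ j ∈ Finset.range N, deriv (Φ j) 0 = α * Φ 0 0) := by
  have hω₀ : 0 < ω := (div_nonneg (sq_nonneg α) (sq_nonneg _)).trans_lt hω
  have hkN : k ≤ N := by exact_mod_cast (by linarith : (k : ℝ) ≤ N)
  have hd : 2 * (k : ℝ) - N ≠ 0 := by linarith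
  have htanh : tanh a * ((2 * k - N) * √ω) = α := by
    rw [ha, tanh_arctanh (div_mul_sqrt_mem_Ioo hd (by rwa [← neg_sub (N : ℝ), neg_sq])),
      div_mul_cancel₀ _ (mul_ne_zero hd (sqrt_pos.mpr hω₀).ne')]
  have hΦc : ∀ j, Φ j = solitonProfile p ω (if j + 1 ≤ k then -a else a) := by
    intro j
    funext x
    rw [hΦ j]
    split_ifs <;> simp only [solitonProfile, sub_eq_add_neg]
  have hΦ0 : ∀ j, Φ j 0 = solitonProfile p ω a 0 := by
    intro j
    rw [hΦc]
    split_ifs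
    exacts [solitonProfile_neg_apply_zero a, rfl]
  refine ⟨fun j _ x _ => hΦc j ▸ solitonProfile_pos hp hω₀ _ x,
    fun j _ => hΦc j ▸ (contDiff_solitonProfile hp hω₀ _).contDiffOn,
    fun j _ x _ => by rw [hΦc, deriv_deriv_solitonProfile hp hω₀]; ring,
    fun i _ j _ => by rw [hΦ0, hΦ0], ?_⟩
  rw [Finset.sum_congr rfl fun j _ => by rw [hΦc j], sum_deriv_solitonProfile_zero hp hω₀ hkN,
    hΦ0, ← htanh]
  ring

/-- The profiles `Φ_k^α` solve the stationary NLS-δ equation on a star graph with `N` edges: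
each component is positive, `C²` on `[0,∞)`, solves `−φ'' + ωφ − φ^p = 0` on `(0,∞)`,
the boundary values at the vertex agree, and the δ-vertex condition holds. -/
theorem stationary_profile_solves_NLS_delta
    (p : ℝ) (hp : 1 < p) (N : ℕ) (hN : 2 ≤ N) (α : ℝ) (hα : α ≠ 0)
    (k : ℕ) (hk : (k : ℝ) ≤ ((N : ℝ) - 1) / 2) (ω : ℝ)
    (hω : α ^ 2 / ((N : ℝ) - 2 * (k : ℝ)) ^ 2 < ω)
    (a : ℝ) (ha : a = arctanh (α / ((2 * (k : ℝ) - (N : ℝ)) * Real.sqrt ω)))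
    (Φ : ℕ → ℝ → ℝ)
    (hΦ : ∀ j, Φ j = fun x : ℝ =>
      if j + 1 ≤ k then
        ((p + 1) * ω / 2 *
          (1 / Real.cosh ((p - 1) * Real.sqrt ω / 2 * x - a)) ^ 2) ^ (1 / (p - 1))
      else
        ((p + 1) * ω / 2 *
          (1 / Real.cosh ((p - 1) * Real.sqrt ω / 2 * x + a)) ^ 2) ^ (1 / (p - 1))) :
    (∀ j < N, ∀ x ≥ (0 : ℝ), 0 < Φ j x) ∧
    (∀ j < N, ContDiffOn ℝ 2 (Φ j) (Set.Ici 0)) ∧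
    (∀ j < N, ∀ x > (0 : ℝ), -(deriv (deriv (Φ j)) x) + ω * Φ j x - Φ j x ^ p = 0) ∧
    (∀ i < N, ∀ j < N, Φ i 0 = Φ j 0) ∧
    (∑ j ∈ Finset.range N, deriv (Φ j) 0 = α * Φ 0 0) :=
  stationary_profile_solves_NLS_delta_general p hp N α k hk ω hω a ha Φ hΦ
end

section
/- Let p > 1, ω > 0 and a ∈ ℝ, and define φ : [0,∞) → ℝ by φ(x) = (((p+1)ω/2)·sech²(((p−1)√ω/2)·x + a))^{1/(p−1)}. Then φ, φ' and φ^{p+1} are integrable on (0,∞) and the Pohozaev-type equality ∫₀^∞ φ'(x)² dx − ω·∫₀^∞ φ(x)² dx + (2/(p+1))·∫₀^∞ φ(x)^{p+1} dx = 0 holds. -/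
/-!
Writing `y = (p - 1)√ω/2 · x + a`, the profile is `φ = C^{1/(p-1)} cosh(y)^{-2/(p-1)}` with
`C = (p + 1)ω/2`, so `φ' = -√ω tanh(y) φ` and `φ^{p-1} = C sech²(y)`. Since `tanh² = 1 - sech²`,
this gives pointwise `φ'² = ω φ² - (2/(p+1)) φ^{p+1}` (the first integral of the stationary
equation), and the Pohozaev identity is its integral. All integrands are dominated by negative
powers of `cosh(y)`, which decay exponentially.
-/

open MeasureTheory Real Set Filter Topology

lemma cosh_rpow_le_exp {s : ℝ} (hs : s ≤ 0) (y : ℝ) : cosh y ^ s ≤ 2 ^ (-s) * exp (s * y) := by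
  have h : exp y / 2 ≤ cosh y := by rw [cosh_eq]; linarith [exp_pos (-y)]
  calc cosh y ^ s ≤ (exp y / 2) ^ s := rpow_le_rpow_of_nonpos (by positivity) h hs
    _ = 2 ^ (-s) * exp (s * y) := by
      rw [div_rpow (exp_pos y).le zero_le_two, ← exp_mul, rpow_neg zero_le_two, mul_comm y]
      ring

lemma integrableOn_cosh_rpow_Ioi (c a : ℝ) {b s : ℝ} (hb : 0 < b) (hs : s < 0) :
    IntegrableOn (fun x => cosh (b * x + a) ^ s) (Ioi c) := by
  have hexp : IntegrableOn (fun x => 2 ^ (-s) * exp (s * a) * exp (-(-s * b) * x)) (Ioi c) :=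
    (exp_neg_integrableOn_Ioi c (by nlinarith)).const_mul _
  refine hexp.mono' (by fun_prop : Measurable _).aestronglyMeasurable (ae_of_all _ fun x => ?_)
  rw [norm_of_nonneg (rpow_nonneg (cosh_pos _).le _), mul_assoc, ← exp_add]
  convert cosh_rpow_le_exp hs.le (b * x + a) using 3
  ring

lemma hasDerivAt_cosh_rpow (a b r x : ℝ) :
    HasDerivAt (fun x => cosh (b * x + a) ^ r)
      (r * b * tanh (b * x + a) * cosh (b * x + a) ^ r) x := by
  have hlin : HasDerivAt (fun x => b * x + a) b x := by
    simpa using ((hasDerivAt_id x).const_mul b).add_const a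
  refine (((hasDerivAt_cosh _).comp x hlin).rpow_const (p := r)
    (Or.inl (cosh_pos _).ne')).congr_deriv ?_
  rw [Function.comp_apply, tanh_eq_sinh_div_cosh, rpow_sub_one (cosh_pos _).ne']
  field_simp

lemma rpow_one_div_sub_one_rpow_add_one {u : ℝ} (hu : 0 < u) {p : ℝ} (hp : p ≠ 1) :
    (u ^ (1 / (p - 1))) ^ (p + 1) = u * (u ^ (1 / (p - 1))) ^ 2 := by
  have : 1 / (p - 1) * (p + 1) = 1 + 1 / (p - 1) * 2 := by
    field_simp [sub_ne_zero.2 hp]; ring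
  rw [← rpow_mul hu.le, this, rpow_add hu, rpow_one, rpow_mul hu.le, rpow_two]

noncomputable def soliton (p ω a x : ℝ) : ℝ :=
  ((p + 1) * ω / 2 * (1 / cosh ((p - 1) * √ω / 2 * x + a)) ^ 2) ^ (1 / (p - 1))

section Soliton

variable {p ω : ℝ} (hp : 1 < p) (hω : 0 < ω) (a : ℝ)
include hp hω

lemma soliton_eq_mul_cosh_rpow :
    soliton p ω a = fun x => ((p + 1) * ω / 2) ^ (1 / (p - 1)) *
      cosh ((p - 1) * √ω / 2 * x + a) ^ (-2 * (1 / (p - 1))) := by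
  ext x
  have hc := cosh_pos ((p - 1) * √ω / 2 * x + a)
  have hsech : (1 / cosh ((p - 1) * √ω / 2 * x + a)) ^ 2
      = cosh ((p - 1) * √ω / 2 * x + a) ^ (-2 : ℝ) := by
    rw [rpow_neg hc.le, rpow_two, one_div, inv_pow]
  rw [soliton, mul_rpow (by nlinarith) (by positivity), hsech, ← rpow_mul hc.le]

lemma soliton_nonneg (x : ℝ) : 0 ≤ soliton p ω a x := by
  rw [soliton_eq_mul_cosh_rpow hp hω]
  have := cosh_pos ((p - 1) * √ω / 2 * x + a)
  positivity

lemma hasDerivAt_soliton (x : ℝ) :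
    HasDerivAt (soliton p ω a)
      (-√ω * tanh ((p - 1) * √ω / 2 * x + a) * soliton p ω a x) x := by
  rw [soliton_eq_mul_cosh_rpow hp hω]
  refine ((hasDerivAt_cosh_rpow a _ _ x).const_mul _).congr_deriv ?_
  field_simp [(by linarith : p - 1 ≠ 0)]

lemma soliton_rpow_add_one (x : ℝ) :
    soliton p ω a x ^ (p + 1) =
      (p + 1) * ω / 2 * (1 / cosh ((p - 1) * √ω / 2 * x + a)) ^ 2 * soliton p ω a x ^ 2 := by
  have := cosh_pos ((p - 1) * √ω / 2 * x + a)
  have : 0 < p + 1 := by linarith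
  exact rpow_one_div_sub_one_rpow_add_one (by positivity) hp.ne'

lemma deriv_soliton_sq (x : ℝ) :
    deriv (soliton p ω a) x ^ 2 =
      ω * soliton p ω a x ^ 2 - 2 / (p + 1) * soliton p ω a x ^ (p + 1) := by
  have hc := cosh_pos ((p - 1) * √ω / 2 * x + a)
  rw [(hasDerivAt_soliton hp hω a x).deriv, soliton_rpow_add_one hp hω a, tanh_eq_sinh_div_cosh]
  field_simp [(by linarith : p + 1 ≠ 0)]
  rw [sq_sqrt hω.le, cosh_sq]
  ring

lemma integrableOn_soliton_rpow (c : ℝ) {s : ℝ} (hs : 0 < s) :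
    IntegrableOn (fun x => soliton p ω a x ^ s) (Ioi c) := by
  have hq : 0 < 1 / (p - 1) := by have := sub_pos.2 hp; positivity
  have hb : 0 < (p - 1) * √ω / 2 := by have := sub_pos.2 hp; have := sqrt_pos.2 hω; positivity
  have h := (integrableOn_cosh_rpow_Ioi c a hb
    (by nlinarith : -2 * (1 / (p - 1)) * s < 0)).const_mul ((((p + 1) * ω / 2) ^ (1 / (p - 1))) ^ s)
  refine IntegrableOn.congr_fun h (fun x _ => ?_) measurableSet_Ioi
  rw [soliton_eq_mul_cosh_rpow hp hω, mul_rpow (by positivity) (rpow_nonneg (cosh_pos _).le _),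
    ← rpow_mul (cosh_pos _).le]

lemma integrableOn_deriv_soliton (c : ℝ) : IntegrableOn (deriv (soliton p ω a)) (Ioi c) := by
  have h := (integrableOn_soliton_rpow hp hω a c one_pos).const_mul √ω
  refine h.mono' (measurable_deriv _).aestronglyMeasurable (ae_of_all _ fun x => ?_)
  rw [(hasDerivAt_soliton hp hω a x).deriv, rpow_one, norm_mul, norm_mul, norm_neg,
    norm_of_nonneg (sqrt_nonneg ω), norm_of_nonneg (soliton_nonneg hp hω a x), norm_eq_abs]
  exact mul_le_mul_of_nonneg_right
    (mul_le_of_le_one_right (sqrt_nonneg ω) (abs_tanh_lt_one _).le) (soliton_nonneg hp hω a x)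

end Soliton

/-- The translated soliton profile on the half-line is integrable (together with its
derivative and `(p+1)`-st power) and satisfies the Pohozaev-type equality
`∫φ'² − ω∫φ² + (2/(p+1))∫φ^{p+1} = 0`. -/
theorem soliton_pohozaev (p ω a : ℝ) (hp : 1 < p) (hω : 0 < ω)
    (φ : ℝ → ℝ)
    (hφ : φ = fun x : ℝ => ((p + 1) * ω / 2 *
      (1 / Real.cosh ((p - 1) * Real.sqrt ω / 2 * x + a)) ^ 2) ^ (1 / (p - 1))) :
    IntegrableOn φ (Set.Ioi 0) ∧
    IntegrableOn (deriv φ) (Set.Ioi 0) ∧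
    IntegrableOn (fun x => φ x ^ (p + 1)) (Set.Ioi 0) ∧
    (∫ x in Set.Ioi (0 : ℝ), (deriv φ x) ^ 2)
      - ω * (∫ x in Set.Ioi (0 : ℝ), (φ x) ^ 2)
      + 2 / (p + 1) * (∫ x in Set.Ioi (0 : ℝ), φ x ^ (p + 1)) = 0 := by
  obtain rfl : φ = soliton p ω a := hφ
  have hint (s : ℝ) (hs : 0 < s) := integrableOn_soliton_rpow hp hω a 0 hs
  have hsq : IntegrableOn (fun x => soliton p ω a x ^ 2) (Ioi 0) := by
    simpa only [rpow_two] using hint 2 two_pos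
  refine ⟨by simpa only [rpow_one] using hint 1 one_pos, integrableOn_deriv_soliton hp hω a 0,
    hint (p + 1) (by linarith), ?_⟩
  rw [integral_congr_ae (ae_of_all _ (deriv_soliton_sq hp hω a)),
    integral_sub (hsq.const_mul ω) ((hint (p + 1) (by linarith)).const_mul _),
    integral_const_mul, integral_const_mul]
  ring
end

section
/- Let p > 5 and define f : [0,1] → ℝ by f(ξ) = ((p−5)/2)·∫_ξ^1 (1−s²)^{2/(p−1)} ds − ξ·(1−ξ²)^{2/(p−1)}. Then f has exactly one zero ξ₁ in the open interval (0,1); moreover f(ξ) ≥ 0 for all ξ ∈ [0,ξ₁] and f(ξ) < 0 for all ξ ∈ (ξ₁,1). -/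
open MeasureTheory Real Set Filter Topology

/-!
With `c = (p-5)/2` and `α = 2/(p-1)`, a direct computation gives
`f'(ξ) = (1-ξ²)^(α-1) · ((c+1+2α)ξ² - (c+1))`, so on `[0,1]` the function `f` strictly decreases
up to `ξ* = √((c+1)/(c+1+2α)) < 1` and strictly increases after it. Since `f 0 > 0 = f 1`,
`f` is negative on `(ξ*, 1)` and crosses zero exactly once, inside `(0, ξ*)`.
-/

section Valley

variable {f : ℝ → ℝ} {a b c : ℝ}

theorem exists_unique_zero_of_strictAntiOn_of_strictMonoOn (hac : a ≤ c) (hcb : c < b)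
    (hfc : ContinuousOn f (Icc a c)) (hanti : StrictAntiOn f (Icc a c))
    (hmono : StrictMonoOn f (Icc c b)) (ha : 0 < f a) (hb : f b ≤ 0) :
    ∃ x ∈ Ioo a c, f x = 0 ∧ (∀ y ∈ Ioo a b, f y = 0 → y = x) ∧
      (∀ y ∈ Icc a x, 0 ≤ f y) ∧ (∀ y ∈ Ioo x b, f y < 0) := by
  have hc_neg : f c < 0 :=
    (hmono (left_mem_Icc.2 hcb.le) (right_mem_Icc.2 hcb.le) hcb).trans_le hb
  obtain ⟨x, hx, hfx⟩ : ∃ x ∈ Ioo a c, f x = 0 :=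
    intermediate_value_Ioo' hac hfc ⟨hc_neg, ha⟩
  have hxI : x ∈ Icc a c := Ioo_subset_Icc_self hx
  have hpos : ∀ y ∈ Ico a x, 0 < f y := fun y hy =>
    hfx ▸ hanti ⟨hy.1, hy.2.le.trans hx.2.le⟩ hxI hy.2
  have hneg : ∀ y ∈ Ioo x b, f y < 0 := by
    intro y hy
    rcases le_or_gt y c with hyc | hcy
    · exact hfx ▸ hanti hxI ⟨hx.1.le.trans hy.1.le, hyc⟩ hy.1
    · exact (hmono ⟨hcy.le, hy.2.le⟩ ⟨hcb.le, le_rfl⟩ hy.2).trans_le hb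
  refine ⟨x, hx, hfx, fun y hy hfy => ?_, fun y hy => ?_, hneg⟩
  · rcases lt_trichotomy y x with hyx | rfl | hxy
    · exact absurd hfy (hpos y ⟨hy.1.le, hyx⟩).ne'
    · rfl
    · exact absurd hfy (hneg y ⟨hxy, hy.2⟩).ne
  · rcases hy.2.lt_or_eq with hyx | rfl
    · exact (hpos y ⟨hy.1, hyx⟩).le
    · exact hfx.ge

end Valley

noncomputable def thresholdFun (c α ξ : ℝ) : ℝ :=
  c * (∫ s in ξ..1, (1 - s ^ 2) ^ α) - ξ * (1 - ξ ^ 2) ^ α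

section ThresholdFun

variable {c α : ℝ}

theorem continuous_one_sub_sq_rpow (hα : 0 ≤ α) : Continuous fun s : ℝ => (1 - s ^ 2) ^ α :=
  (continuous_const.sub (continuous_pow 2)).rpow_const fun _ => Or.inr hα

theorem continuous_thresholdFun (hα : 0 ≤ α) : Continuous (thresholdFun c α) := by
  have hint : Continuous fun ξ : ℝ => ∫ s in ξ..1, (1 - s ^ 2) ^ α := by
    have hsymm : (fun ξ : ℝ => ∫ s in ξ..1, (1 - s ^ 2) ^ α)
        = fun ξ => -∫ s in (1 : ℝ)..ξ, (1 - s ^ 2) ^ α :=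
      funext fun ξ => intervalIntegral.integral_symm _ _
    rw [hsymm]
    exact (intervalIntegral.continuous_primitive
      (fun a b => (continuous_one_sub_sq_rpow hα).intervalIntegrable a b) 1).neg
  exact (continuous_const.mul hint).sub (continuous_id.mul (continuous_one_sub_sq_rpow hα))

theorem hasDerivAt_thresholdFun (hα : 0 ≤ α) {ξ : ℝ} (hξ : ξ ∈ Ioo (-1 : ℝ) 1) :
    HasDerivAt (thresholdFun c α)
      ((1 - ξ ^ 2) ^ (α - 1) * ((c + 1 + 2 * α) * ξ ^ 2 - (c + 1))) ξ := by
  have hpos : 0 < 1 - ξ ^ 2 := by nlinarith [hξ.1, hξ.2]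
  have hg := continuous_one_sub_sq_rpow hα
  have hint : HasDerivAt (fun u => ∫ s in u..1, (1 - s ^ 2) ^ α) (-(1 - ξ ^ 2) ^ α) ξ :=
    intervalIntegral.integral_hasDerivAt_left (hg.intervalIntegrable ξ 1)
      (hg.stronglyMeasurableAtFilter _ _) hg.continuousAt
  have hbase : HasDerivAt (fun x : ℝ => 1 - x ^ 2) (-(2 * ξ)) ξ := by
    simpa using (hasDerivAt_pow 2 ξ).const_sub 1
  have hsplit : (1 - ξ ^ 2) ^ α = (1 - ξ ^ 2) ^ (α - 1) * (1 - ξ ^ 2) := by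
    rw [← rpow_add_one hpos.ne']
    ring_nf
  refine ((hint.const_mul c).sub ((hasDerivAt_id ξ).mul
    (hbase.rpow_const (Or.inl hpos.ne')))).congr_deriv ?_
  rw [hsplit, id]
  ring

theorem strictAntiOn_thresholdFun (hc : -1 < c) (hα : 0 ≤ α) :
    StrictAntiOn (thresholdFun c α) (Icc 0 √((c + 1) / (c + 1 + 2 * α))) := by
  have hden : 0 < c + 1 + 2 * α := by linarith
  refine strictAntiOn_of_deriv_neg (convex_Icc _ _) (continuous_thresholdFun hα).continuousOn ?_
  intro x hx
  rw [interior_Icc] at hx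
  have hx_sq : (c + 1 + 2 * α) * x ^ 2 < c + 1 :=
    (lt_div_iff₀' hden).1 ((lt_sqrt hx.1.le).1 hx.2)
  have hx_lt : x < 1 := hx.2.trans_le (sqrt_le_one.2 ((div_le_one hden).2 (by linarith)))
  rw [(hasDerivAt_thresholdFun hα ⟨by linarith [hx.1], hx_lt⟩).deriv]
  exact mul_neg_of_pos_of_neg (rpow_pos_of_pos (by nlinarith [hx.1]) _) (by linarith)

theorem strictMonoOn_thresholdFun (hc : -1 < c) (hα : 0 ≤ α) :
    StrictMonoOn (thresholdFun c α) (Icc √((c + 1) / (c + 1 + 2 * α)) 1) := by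
  have hden : 0 < c + 1 + 2 * α := by linarith
  refine strictMonoOn_of_deriv_pos (convex_Icc _ _) (continuous_thresholdFun hα).continuousOn ?_
  intro x hx
  rw [interior_Icc] at hx
  have hx_pos : 0 < x := (sqrt_nonneg _).trans_lt hx.1
  have hx_sq : c + 1 < (c + 1 + 2 * α) * x ^ 2 :=
    (div_lt_iff₀' hden).1 ((sqrt_lt' hx_pos).1 hx.1)
  rw [(hasDerivAt_thresholdFun hα ⟨by linarith, hx.2⟩).deriv]
  exact mul_pos (rpow_pos_of_pos (by nlinarith [hx.2]) _) (by linarith)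

theorem thresholdFun_zero_pos (hc : 0 < c) (hα : 0 ≤ α) : 0 < thresholdFun c α 0 := by
  have hint : 0 < ∫ s in (0 : ℝ)..1, (1 - s ^ 2) ^ α :=
    intervalIntegral.intervalIntegral_pos_of_pos_on
      ((continuous_one_sub_sq_rpow hα).intervalIntegrable 0 1)
      (fun s hs => rpow_pos_of_pos (by nlinarith [hs.1, hs.2]) _) one_pos
  simpa [thresholdFun] using mul_pos hc hint

theorem thresholdFun_one (hα : α ≠ 0) : thresholdFun c α 1 = 0 := by
  simp [thresholdFun, zero_rpow hα]

theorem exists_unique_zero_thresholdFun (hc : 0 < c) (hα : 0 < α) :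
    ∃ ξ₁ ∈ Ioo (0 : ℝ) 1, thresholdFun c α ξ₁ = 0 ∧
      (∀ ξ ∈ Ioo (0 : ℝ) 1, thresholdFun c α ξ = 0 → ξ = ξ₁) ∧
      (∀ ξ ∈ Icc (0 : ℝ) ξ₁, 0 ≤ thresholdFun c α ξ) ∧
      (∀ ξ ∈ Ioo ξ₁ 1, thresholdFun c α ξ < 0) := by
  have hc' : -1 < c := by linarith
  have hcrit_lt : √((c + 1) / (c + 1 + 2 * α)) < 1 := by
    rw [sqrt_lt' one_pos, one_pow, div_lt_one (by linarith)]
    linarith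
  obtain ⟨ξ₁, hξ₁, h⟩ := exists_unique_zero_of_strictAntiOn_of_strictMonoOn (sqrt_nonneg _)
    hcrit_lt (continuous_thresholdFun hα.le).continuousOn (strictAntiOn_thresholdFun hc' hα.le)
    (strictMonoOn_thresholdFun hc' hα.le) (thresholdFun_zero_pos hc hα.le)
    (thresholdFun_one hα.ne').le
  exact ⟨ξ₁, ⟨hξ₁.1, hξ₁.2.trans hcrit_lt⟩, h⟩

end ThresholdFun

/-- For `p > 5` the function
`f(ξ) = ((p−5)/2)·∫_ξ^1 (1−s²)^{2/(p−1)} ds − ξ·(1−ξ²)^{2/(p−1)}`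
has exactly one zero `ξ₁` in `(0,1)`; moreover `f ≥ 0` on `[0,ξ₁]` and `f < 0` on `(ξ₁,1)`. -/
theorem unique_zero_of_threshold_function (p : ℝ) (hp : 5 < p)
    (f : ℝ → ℝ)
    (hf : f = fun ξ : ℝ => (p - 5) / 2 * (∫ s in ξ..1, (1 - s ^ 2) ^ (2 / (p - 1)))
      - ξ * (1 - ξ ^ 2) ^ (2 / (p - 1))) :
    ∃ ξ₁ ∈ Set.Ioo (0 : ℝ) 1, f ξ₁ = 0 ∧
      (∀ ξ ∈ Set.Ioo (0 : ℝ) 1, f ξ = 0 → ξ = ξ₁) ∧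
      (∀ ξ ∈ Set.Icc (0 : ℝ) ξ₁, 0 ≤ f ξ) ∧
      (∀ ξ ∈ Set.Ioo ξ₁ 1, f ξ < 0) := by
  have hf' : f = thresholdFun ((p - 5) / 2) (2 / (p - 1)) := hf
  subst hf'
  exact exists_unique_zero_thresholdFun (by linarith) (div_pos two_pos (by linarith))
end

section
/- Let A, B, β, λ be real numbers with A ≥ 0, B ≥ 0, β ≥ 2 and λ > 0. Then (2λ − λ²)·A + (β·λ² − 2·λ^β)·B ≤ A + (β − 2)·B. -/
open Real

/-- The function `λ ↦ (2λ−λ²)A + (βλ²−2λ^β)B` with `A,B ≥ 0` and `β ≥ 2` attains its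
maximum on `(0,∞)` at `λ = 1`, where its value is `A + (β−2)B`. -/
theorem scaling_function_max_at_one (A B β lam : ℝ)
    (hA : 0 ≤ A) (hB : 0 ≤ B) (hβ : 2 ≤ β) (hlam : 0 < lam) :
    (2 * lam - lam ^ 2) * A + (β * lam ^ 2 - 2 * lam ^ β) * B ≤ A + (β - 2) * B := by
  have h1 : (2 * lam - lam ^ 2) * A ≤ 1 * A := by
    apply mul_le_mul_of_nonneg_right _ hA
    nlinarith [sq_nonneg (lam - 1)]
  have hkey : 1 + (β/2) * (lam ^ 2 - 1) ≤ (1 + (lam ^ 2 - 1)) ^ (β/2) := by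
    apply one_add_mul_self_le_rpow_one_add (by nlinarith [sq_nonneg lam]) (by linarith)
  have hpow : (1 + (lam ^ 2 - 1)) ^ (β/2) = lam ^ β := by
    have h2 : (1 : ℝ) + (lam ^ 2 - 1) = lam ^ 2 := by ring
    rw [h2, ← Real.rpow_natCast lam 2, ← Real.rpow_mul hlam.le]
    ring_nf
  rw [hpow] at hkey
  have h2 : (β * lam ^ 2 - 2 * lam ^ β) * B ≤ (β - 2) * B := by
    apply mul_le_mul_of_nonneg_right _ hB
    nlinarith
  linarith
end

section
/- Let β > 2 and λ ∈ (0,1). Then β·(λ² + (β−3)·λ^β)/(λ·(2−λ)) ≤ (2·λ^β − β·λ² − 2 + β)/(λ−1)². -/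
/-!
Clearing denominators and writing `s = 1 - λ`, the inequality becomes
`2 λ (1 - (β - 1) s) ≤ (2 - (β - 1) (β - 2) s²) λ^β`. Divided by `λ^β` it says `K λ ≤ 2` for
`K λ = 2 (1 - (β - 1) s) λ^(1 - β) + (β - 1) (β - 2) s²`, and
`K' λ = 2 (β - 1) (β - 2) s (λ^(-β) - 1) ≥ 0` on `(0, 1]`, so `K λ ≤ K 1 = 2`.
-/

open Real Set

noncomputable def comparisonFun (β t : ℝ) : ℝ :=
  2 * (1 - (β - 1) * (1 - t)) * t ^ (1 - β) + (β - 1) * (β - 2) * (1 - t) ^ 2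

lemma hasDerivAt_comparisonFun (β : ℝ) {t : ℝ} (ht : 0 < t) :
    HasDerivAt (comparisonFun β) (2 * (β - 1) * (β - 2) * (1 - t) * (t ^ (-β) - 1)) t := by
  have hpow : HasDerivAt (fun t : ℝ => t ^ (1 - β)) ((1 - β) * t ^ (-β)) t := by
    simpa using hasDerivAt_rpow_const (p := 1 - β) (Or.inl ht.ne')
  have hlin : HasDerivAt (fun t : ℝ => 1 - t) (-1) t := by
    simpa using (hasDerivAt_id t).const_sub 1
  have hsplit : t ^ (1 - β) = t * t ^ (-β) := by
    rw [sub_eq_add_neg, rpow_add ht, rpow_one]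
  refine (((((hlin.const_mul (β - 1)).const_sub 1).const_mul 2).mul hpow).add
    ((hlin.pow 2).const_mul ((β - 1) * (β - 2)))).congr_deriv ?_
  rw [hsplit]
  ring

lemma monotoneOn_comparisonFun {β : ℝ} (hβ : 2 ≤ β) : MonotoneOn (comparisonFun β) (Ioc 0 1) := by
  have hderiv : ∀ t ∈ Ioc (0 : ℝ) 1, HasDerivAt (comparisonFun β) _ t :=
    fun t ht => hasDerivAt_comparisonFun β ht.1
  refine monotoneOn_of_deriv_nonneg (convex_Ioc 0 1)
    (fun t ht => (hderiv t ht).continuousAt.continuousWithinAt)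
    (fun t ht => ?_) (fun t ht => ?_) <;> rw [interior_Ioc] at ht
  · exact (hderiv t (Ioo_subset_Ioc_self ht)).differentiableAt.differentiableWithinAt
  · rw [(hderiv t (Ioo_subset_Ioc_self ht)).deriv]
    have hpow : 1 ≤ t ^ (-β) :=
      one_le_rpow_of_pos_of_le_one_of_nonpos ht.1 ht.2.le (by linarith)
    have hcoeff : 0 ≤ (β - 1) * (β - 2) * (1 - t) :=
      mul_nonneg (mul_nonneg (by linarith) (by linarith)) (by linarith [ht.2])
    nlinarith [mul_nonneg hcoeff (sub_nonneg.mpr hpow)]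

lemma two_mul_mul_le_mul_rpow {β t : ℝ} (hβ : 2 ≤ β) (ht : t ∈ Ioc 0 1) :
    2 * t * (1 - (β - 1) * (1 - t)) ≤ (2 - (β - 1) * (β - 2) * (1 - t) ^ 2) * t ^ β := by
  have hle : comparisonFun β t ≤ 2 := by
    simpa [comparisonFun] using monotoneOn_comparisonFun hβ ht ⟨one_pos, le_rfl⟩ ht.2
  have hcancel : t ^ (1 - β) * t ^ β = t := by
    rw [← rpow_add ht.1, sub_add_cancel, rpow_one]
  have hscaled := mul_le_mul_of_nonneg_right hle (rpow_nonneg ht.1.le β)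
  unfold comparisonFun at hscaled
  linear_combination hscaled - 2 * (1 - (β - 1) * (1 - t)) * hcancel

/-- Elementary inequality for `β > 2` and `λ ∈ (0,1)`:
`β(λ² + (β−3)λ^β)/(λ(2−λ)) ≤ (2λ^β − βλ² − 2 + β)/(λ−1)²`. -/
theorem key_elementary_inequality (β lam : ℝ) (hβ : 2 < β) (hlam : lam ∈ Set.Ioo (0 : ℝ) 1) :
    β * (lam ^ 2 + (β - 3) * lam ^ β) / (lam * (2 - lam))
      ≤ (2 * lam ^ β - β * lam ^ 2 - 2 + β) / (lam - 1) ^ 2 := by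
  obtain ⟨hlam0, hlam1⟩ := hlam
  have hbound := two_mul_mul_le_mul_rpow hβ.le ⟨hlam0, hlam1.le⟩
  rw [div_le_div_iff₀ (by nlinarith) (by nlinarith)]
  linear_combination hbound
end
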